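/- arXiv:1403.2949 — 3 statements merged into one kernel-verified Lean document; each statement's English description precedes it below -/
import Mathlib

section
/- Let K be an imaginary quadratic number field with discriminant D. Then the class number of K satisfies h_K < (1/π) · √|D| · (2 + log |D|). -/
/-!
By Minkowski's bound every ideal class of a quadratic field `K` contains an ideal of norm at most
`M = (2/π)√|D|`, so `h_K` is at most the number of ideals of norm `n ≤ M`. An ideal of norm
`n` is determined by its multiplicity at one chosen prime above each `p ∣ n`, and that
multiplicity is at most `v_p(n)`: above `p` lies either a single prime, or two primes of norm
`p` whose multiplicities add up to `v_p(n)`. Hence there are at most `d(n)` ideals of norm `n`,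
and `∑_{n ≤ M} d(n) ≤ M (1 + log M) < (1/π)√|D| (2 + log |D|)` because `log (2/π) < 0`.
-/

open Module Ideal UniqueFactorizationMonoid Finset NumberField Real
open scoped nonZeroDivisors

theorem Multiset.sum_map_ite_eq_count {α : Type*} [DecidableEq α] (s : Multiset α) (a : α) :
    (s.map fun x => if x = a then 1 else 0).sum = s.count a := by
  induction s using Multiset.induction_on with
  | empty => simp
  | cons b s ih =>
    by_cases h : b = a <;> simp [h, ih, Ne.symm, add_comm]

theorem Nat.factorization_multiset_prod_apply {s : Multiset ℕ} (hs : 0 ∉ s) (p : ℕ) :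
    s.prod.factorization p = (s.map (·.factorization p)).sum := by
  induction s using Multiset.induction_on with
  | empty => simp
  | cons a s ih =>
    rw [Multiset.mem_cons, not_or] at hs
    rw [Multiset.prod_cons, Nat.factorization_mul (Ne.symm hs.1) (Multiset.prod_ne_zero hs.2),
      Finsupp.add_apply, ih hs.2, Multiset.map_cons, Multiset.sum_cons]

section DedekindDomain

variable {R : Type*} [CommRing R] [IsDedekindDomain R] [Module.Free ℤ R] [Module.Finite ℤ R]

theorem exists_prime_natCast_mem {p : ℕ} (hp : p.Prime) :
    ∃ P : Ideal R, Prime P ∧ (p : R) ∈ P := by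
  have hnorm : absNorm (span {(p : R)}) = p ^ finrank ℤ R := absNorm_span_natCast p
  have hne_top : span {(p : R)} ≠ ⊤ := by
    rw [ne_eq, ← absNorm_eq_one_iff, hnorm]
    exact (Nat.one_lt_pow finrank_pos.ne' hp.one_lt).ne'
  obtain ⟨P, hP, hle⟩ := exists_le_maximal _ hne_top
  have hne_bot : P ≠ ⊥ := by
    refine ne_bot_of_le_ne_bot ?_ hle
    rw [ne_eq, ← absNorm_eq_zero_iff, hnorm]
    exact pow_ne_zero _ hp.ne_zero
  exact ⟨P, prime_of_isPrime hne_bot hP.isPrime, hle (mem_span_singleton_self _)⟩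

theorem absNorm_eq_pow_of_natCast_mem {P : Ideal R} (hP : Prime P) {p : ℕ} (hp : p.Prime)
    (hpP : (p : R) ∈ P) : ∃ k, 0 < k ∧ absNorm P = p ^ k := by
  have := (isPrime_of_prime hP).isMaximal hP.ne_zero
  obtain ⟨q, k, hk, -, hq, hnorm⟩ := exists_prime_and_absNorm_eq_pow P
  have hdvd : q ^ k ∣ p ^ finrank ℤ R := by
    rw [← hnorm, ← absNorm_span_natCast]
    exact map_dvd absNorm (dvd_span_singleton.mpr hpP)
  obtain rfl : q = p := (Nat.prime_dvd_prime_iff_eq hq hp).mp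
    (hq.dvd_of_dvd_pow ((dvd_pow_self q hk.ne').trans hdvd))
  exact ⟨k, hk, hnorm⟩

theorem factorization_absNorm_eq_zero_of_natCast_notMem {P : Ideal R} (hP : Prime P) {p : ℕ}
    (hpP : (p : R) ∉ P) : (absNorm P).factorization p = 0 := by
  have := (isPrime_of_prime hP).isMaximal hP.ne_zero
  obtain ⟨q, k, -, hqP, hq, hnorm⟩ := exists_prime_and_absNorm_eq_pow P
  have hpq : p ≠ q := by rintro rfl; exact hpP hqP
  rw [hnorm, hq.factorization_pow, Finsupp.single_eq_of_ne hpq]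

theorem factorization_absNorm_eq_sum {I : Ideal R} (hI : I ≠ ⊥) (p : ℕ) :
    (absNorm I).factorization p =
      ((normalizedFactors I).map fun Q => (absNorm Q).factorization p).sum := by
  have hne : 0 ∉ (normalizedFactors I).map absNorm := by
    simp only [Multiset.mem_map, not_exists, not_and]
    exact fun Q hQ h => (prime_of_normalized_factor Q hQ).ne_zero (absNorm_eq_zero_iff.mp h)
  conv_lhs => rw [← Ideal.prod_normalizedFactors_eq_self hI]
  rw [map_multiset_prod, Nat.factorization_multiset_prod_apply hne, Multiset.map_map]
  rfl

theorem count_normalizedFactors_le_factorization_absNorm {P : Ideal R} (hP : Prime P) {p : ℕ}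
    (hp : p.Prime) (hpP : (p : R) ∈ P) {I : Ideal R} (hI : I ≠ ⊥) :
    (normalizedFactors I).count P ≤ (absNorm I).factorization p := by
  obtain ⟨k, hk, hnorm⟩ := absNorm_eq_pow_of_natCast_mem hP hp hpP
  set c := (normalizedFactors I).count P
  have hPc : P ^ c ∣ I := by
    rw [← Ideal.prod_normalizedFactors_eq_self hI, ← Multiset.prod_replicate]
    exact Multiset.prod_dvd_prod_of_le (Multiset.le_count_iff_replicate_le.mp le_rfl)
  have hpc : p ^ c ∣ absNorm I :=
    calc p ^ c ∣ absNorm P ^ c := pow_dvd_pow_of_dvd (hnorm ▸ dvd_pow_self p hk.ne') c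
      _ ∣ absNorm I := by rw [← map_pow]; exact map_dvd absNorm hPc
  exact (hp.pow_dvd_iff_le_factorization (by rwa [ne_eq, absNorm_eq_zero_iff])).mp hpc

theorem sum_factorization_absNorm_le_finrank {p : ℕ} (hp : p.Prime) {s : Finset (Ideal R)}
    (hs : ∀ Q ∈ s, Prime Q ∧ (p : R) ∈ Q) :
    ∑ Q ∈ s, (absNorm Q).factorization p ≤ finrank ℤ R := by
  have hne : ∀ Q ∈ s, absNorm Q ≠ 0 := fun Q hQ => by
    rw [ne_eq, absNorm_eq_zero_iff]; exact (hs Q hQ).1.ne_zero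
  have hdvd : ∏ Q ∈ s, absNorm Q ∣ p ^ finrank ℤ R := by
    rw [← map_prod, ← absNorm_span_natCast]
    exact map_dvd absNorm (prod_primes_dvd _ (fun Q hQ => (hs Q hQ).1)
      fun Q hQ => dvd_span_singleton.mpr (hs Q hQ).2)
  calc ∑ Q ∈ s, (absNorm Q).factorization p = (∏ Q ∈ s, absNorm Q).factorization p := by
        rw [Nat.factorization_prod hne, Finset.sum_apply']
    _ ≤ (p ^ finrank ℤ R).factorization p :=
        (Nat.factorization_le_iff_dvd (prod_ne_zero_iff.mpr hne) (pow_ne_zero _ hp.ne_zero)).mpr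
          hdvd p
    _ = finrank ℤ R := by rw [hp.factorization_pow, Finsupp.single_eq_same]

section RankTwo

variable {p : ℕ} {P₀ P : Ideal R}

theorem absNorm_eq_of_ne_of_natCast_mem (hR : finrank ℤ R = 2) (hp : p.Prime)
    (hP₀ : Prime P₀) (hP : Prime P) (hne : P₀ ≠ P)
    (h₀ : (p : R) ∈ P₀) (h : (p : R) ∈ P) : absNorm P = p := by
  obtain ⟨k₀, hk₀, hN₀⟩ := absNorm_eq_pow_of_natCast_mem hP₀ hp h₀
  obtain ⟨k, hk, hN⟩ := absNorm_eq_pow_of_natCast_mem hP hp h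
  have hsum := sum_factorization_absNorm_le_finrank hp (s := {P₀, P}) (by simp [*])
  rw [sum_pair hne, hN₀, hN, hp.factorization_pow, hp.factorization_pow, Finsupp.single_eq_same,
    Finsupp.single_eq_same, hR] at hsum
  rw [hN, show k = 1 by omega, pow_one]

theorem eq_or_eq_of_natCast_mem (hR : finrank ℤ R = 2) (hp : p.Prime)
    (hP₀ : Prime P₀) (hP : Prime P) (hne : P₀ ≠ P)
    (h₀ : (p : R) ∈ P₀) (h : (p : R) ∈ P) {Q : Ideal R} (hQ : Prime Q)
    (hpQ : (p : R) ∈ Q) :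
    Q = P₀ ∨ Q = P := by
  by_contra! hQne
  have hsum := sum_factorization_absNorm_le_finrank hp (s := {P₀, P, Q}) (by simp [*])
  rw [sum_insert (by simp [hne, hQne.1.symm]), sum_pair hQne.2.symm,
    absNorm_eq_of_ne_of_natCast_mem hR hp hP hP₀ hne.symm h h₀,
    absNorm_eq_of_ne_of_natCast_mem hR hp hP₀ hP hne h₀ h,
    absNorm_eq_of_ne_of_natCast_mem hR hp hP₀ hQ hQne.1.symm h₀ hpQ,
    hp.factorization_self, hR] at hsum
  omega

theorem factorization_absNorm_eq_count_add_count (hR : finrank ℤ R = 2) (hp : p.Prime)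
    (hP₀ : Prime P₀) (hP : Prime P) (hne : P₀ ≠ P)
    (h₀ : (p : R) ∈ P₀) (h : (p : R) ∈ P) {I : Ideal R} (hI : I ≠ ⊥) :
    (absNorm I).factorization p =
      (normalizedFactors I).count P₀ + (normalizedFactors I).count P := by
  rw [factorization_absNorm_eq_sum hI, ← Multiset.sum_map_ite_eq_count,
    ← Multiset.sum_map_ite_eq_count, ← Multiset.sum_map_add]
  refine congrArg _ (Multiset.map_congr rfl fun Q hQ => ?_)
  have hQ := prime_of_normalized_factor Q hQ
  by_cases hpQ : (p : R) ∈ Q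
  · rcases eq_or_eq_of_natCast_mem hR hp hP₀ hP hne h₀ h hQ hpQ with rfl | rfl
    · simp [absNorm_eq_of_ne_of_natCast_mem hR hp hP hQ hne.symm h h₀, hp.factorization_self,
        hne]
    · simp [absNorm_eq_of_ne_of_natCast_mem hR hp hP₀ hQ hne h₀ h, hp.factorization_self,
        hne.symm]
  · have hQ₀ : Q ≠ P₀ := by rintro rfl; exact hpQ h₀
    have hQP : Q ≠ P := by rintro rfl; exact hpQ h
    simp [factorization_absNorm_eq_zero_of_natCast_notMem hQ hpQ, hQ₀, hQP]

theorem count_normalizedFactors_eq_of_factorization_absNorm_eq (hR : finrank ℤ R = 2)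
    (hp : p.Prime) (hP₀ : Prime P₀) (hP : Prime P) (h₀ : (p : R) ∈ P₀) (h : (p : R) ∈ P)
    {I J : Ideal R} (hI : I ≠ ⊥) (hJ : J ≠ ⊥)
    (hIJ : (absNorm I).factorization p = (absNorm J).factorization p)
    (hcount : (normalizedFactors I).count P₀ = (normalizedFactors J).count P₀) :
    (normalizedFactors I).count P = (normalizedFactors J).count P := by
  rcases eq_or_ne P₀ P with rfl | hne
  · exact hcount
  · rw [factorization_absNorm_eq_count_add_count hR hp hP₀ hP hne h₀ h hI,
      factorization_absNorm_eq_count_add_count hR hp hP₀ hP hne h₀ h hJ] at hIJ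
    omega

theorem eq_of_count_normalizedFactors_eq (hR : finrank ℤ R = 2) {n : ℕ} (hn : n ≠ 0)
    (σ : n.primeFactors → Ideal R) (hσ : ∀ q, Prime (σ q) ∧ ((q : ℕ) : R) ∈ σ q)
    {I J : Ideal R} (hI : absNorm I = n) (hJ : absNorm J = n)
    (hIJ : ∀ q, (normalizedFactors I).count (σ q) = (normalizedFactors J).count (σ q)) :
    I = J := by
  have hne {K : Ideal R} (hK : absNorm K = n) : K ≠ ⊥ := fun h =>
    hn (by rw [← hK, h, absNorm_bot])
  rw [← Ideal.prod_normalizedFactors_eq_self (hne hI),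
    ← Ideal.prod_normalizedFactors_eq_self (hne hJ)]
  congr 1
  ext Q
  by_cases hQ : Prime Q
  swap
  · have hQ_notMem {K : Ideal R} : Q ∉ normalizedFactors K :=
      mt (prime_of_normalized_factor Q) hQ
    rw [Multiset.count_eq_zero.mpr hQ_notMem, Multiset.count_eq_zero.mpr hQ_notMem]
  have := (isPrime_of_prime hQ).isMaximal hQ.ne_zero
  obtain ⟨q, -, -, hqQ, hq, -⟩ := exists_prime_and_absNorm_eq_pow Q
  by_cases hqn : q ∣ n
  · let q' : n.primeFactors := ⟨q, Nat.mem_primeFactors.mpr ⟨hq, hqn, hn⟩⟩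
    exact count_normalizedFactors_eq_of_factorization_absNorm_eq hR hq (hσ q').1 hQ (hσ q').2 hqQ
      (hne hI) (hne hJ) (by rw [hI, hJ]) (hIJ q')
  · have hcount_zero {K : Ideal R} (hK : absNorm K = n) : (normalizedFactors K).count Q = 0 := by
      have := count_normalizedFactors_le_factorization_absNorm hQ hq hqQ (hne hK)
      rwa [hK, Nat.factorization_eq_zero_of_not_dvd hqn, Nat.le_zero] at this
    rw [hcount_zero hI, hcount_zero hJ]

theorem ncard_absNorm_eq_le_card_divisors (hR : finrank ℤ R = 2) {n : ℕ} (hn : n ≠ 0) :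
    {I : Ideal R | absNorm I = n}.ncard ≤ #n.divisors := by
  choose σ hσ using fun q : n.primeFactors =>
    exists_prime_natCast_mem (R := R) (Nat.prime_of_mem_primeFactors q.2)
  let exponents (I : Ideal R) (q : n.primeFactors) : ℕ := (normalizedFactors I).count (σ q)
  let bounds : Finset (n.primeFactors → ℕ) :=
    Fintype.piFinset fun q => range (n.factorization q + 1)
  calc {I : Ideal R | absNorm I = n}.ncard ≤ (bounds : Set (n.primeFactors → ℕ)).ncard := by
        refine Set.ncard_le_ncard_of_injOn exponents (fun I hI => ?_)
          (fun I hI J hJ hIJ => eq_of_count_normalizedFactors_eq hR hn σ hσ hI hJ (congrFun hIJ))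
        rw [Set.mem_ofPred_eq] at hI
        simp only [bounds, mem_coe, Fintype.mem_piFinset, mem_range, Nat.lt_succ_iff]
        intro q
        have hI0 : I ≠ ⊥ := fun h => hn (by rw [← hI, h, absNorm_bot])
        simpa [hI] using count_normalizedFactors_le_factorization_absNorm (hσ q).1
          (Nat.prime_of_mem_primeFactors q.2) (hσ q).2 hI0
    _ = #n.divisors := by
        rw [Set.ncard_coe_finset, Fintype.card_piFinset, Nat.card_divisors hn,
          ← prod_coe_sort n.primeFactors]
        simp only [card_range]

end RankTwo

end DedekindDomain

theorem sum_card_divisors_eq_sum_div (N : ℕ) :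
    ∑ n ∈ Icc 1 N, #n.divisors = ∑ d ∈ Icc 1 N, N / d := by
  have hdivisors : ∀ n ∈ Icc 1 N, n.divisors = {d ∈ Icc 1 N | d ∣ n} := by
    intro n hn
    rw [mem_Icc] at hn
    ext d
    simp only [Nat.mem_divisors, mem_filter, mem_Icc]
    constructor
    · rintro ⟨hd, -⟩
      exact ⟨⟨Nat.pos_of_dvd_of_pos hd hn.1, (Nat.le_of_dvd hn.1 hd).trans hn.2⟩, hd⟩
    · rintro ⟨-, hd⟩
      exact ⟨hd, by omega⟩
  rw [sum_congr rfl fun n hn => congrArg card (hdivisors n hn)]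
  simp_rw [card_filter]
  rw [sum_comm]
  refine sum_congr rfl fun d _ => ?_
  rw [← card_filter, ← Nat.Ioc_filter_dvd_card_eq_div]
  rfl

theorem sum_card_divisors_le (N : ℕ) :
    (∑ n ∈ Icc 1 N, #n.divisors : ℝ) ≤ N * (1 + Real.log N) := by
  calc (∑ n ∈ Icc 1 N, #n.divisors : ℝ) = ∑ d ∈ Icc 1 N, ((N / d : ℕ) : ℝ) := by
        exact_mod_cast sum_card_divisors_eq_sum_div N
    _ ≤ ∑ d ∈ Icc 1 N, (N : ℝ) / d := sum_le_sum fun d _ => Nat.cast_div_le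
    _ = N * harmonic N := by
        rw [harmonic_eq_sum_Icc, Rat.cast_sum, mul_sum]
        simp [div_eq_mul_inv]
    _ ≤ N * (1 + Real.log N) :=
        mul_le_mul_of_nonneg_left (harmonic_le_one_add_log N) N.cast_nonneg

theorem natFloor_mul_one_add_log_le {x : ℝ} (hx : 1 ≤ x) :
    ⌊x⌋₊ * (1 + Real.log ⌊x⌋₊) ≤ x * (1 + Real.log x) := by
  have hfloor : (1 : ℝ) ≤ ⌊x⌋₊ := by exact_mod_cast Nat.le_floor (by exact_mod_cast hx)
  have hle : (⌊x⌋₊ : ℝ) ≤ x := Nat.floor_le (by linarith)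
  have hlog : 0 ≤ Real.log ⌊x⌋₊ := Real.log_nonneg hfloor
  gcongr

theorem classNumber_le_sum_ncard_absNorm_eq {K : Type*} [Field K] [NumberField K] {B : ℝ}
    (hB : ∀ C : ClassGroup (𝓞 K), ∃ I : (Ideal (𝓞 K))⁰,
      ClassGroup.mk0 I = C ∧ (absNorm (I : Ideal (𝓞 K)) : ℝ) ≤ B) :
    classNumber K ≤ ∑ n ∈ Icc 1 ⌊B⌋₊, {I : Ideal (𝓞 K) | absNorm I = n}.ncard := by
  choose rep hrep hnorm using hB
  have hmaps : Set.MapsTo (fun C => absNorm (rep C : Ideal (𝓞 K)))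
      (univ : Finset (ClassGroup (𝓞 K))) (Icc 1 ⌊B⌋₊) := fun C _ =>
    mem_Icc.mpr ⟨absNorm_pos_of_nonZeroDivisors _, Nat.le_floor (hnorm C)⟩
  rw [classNumber, ← card_univ, card_eq_sum_card_fiberwise hmaps]
  refine sum_le_sum fun n _ => ?_
  rw [← Set.ncard_coe_finset]
  refine Set.ncard_le_ncard_of_injOn (fun C => (rep C : Ideal (𝓞 K)))
    (fun C hC => by simpa using hC) (fun C _ C' _ h => ?_) (finite_setOfPred_absNorm_eq n)
  rw [← hrep C, ← hrep C', Subtype.coe_injective h]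

theorem exists_ideal_in_class_of_norm_le_of_finrank_eq_two {K : Type*} [Field K] [NumberField K]
    (hdeg : finrank ℚ K = 2) (C : ClassGroup (𝓞 K)) :
    ∃ I : (Ideal (𝓞 K))⁰, ClassGroup.mk0 I = C ∧
      (absNorm (I : Ideal (𝓞 K)) : ℝ) ≤ 2 / π * √|(discr K : ℝ)| := by
  obtain ⟨I, hC, hI⟩ := exists_ideal_in_class_of_norm_le C
  refine ⟨I, hC, hI.trans ?_⟩
  have hr : InfinitePlace.nrComplexPlaces K ≤ 1 := by
    have := InfinitePlace.card_add_two_mul_card_eq_rank K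
    omega
  have h4π : 1 ≤ 4 / π := (one_le_div pi_pos).mpr (by linarith [pi_lt_four])
  rw [hdeg]
  norm_num [Nat.factorial]
  calc (4 / π) ^ InfinitePlace.nrComplexPlaces K * (1 / 2 * √|(discr K : ℝ)|)
      ≤ (4 / π) ^ 1 * (1 / 2 * √|(discr K : ℝ)|) := by gcongr
    _ = 2 / π * √|(discr K : ℝ)| := by ring

theorem imaginary_quadratic_classNumber_bound_general (K : Type*) [Field K] [NumberField K]
    (hdeg : Module.finrank ℚ K = 2) :
    (NumberField.classNumber K : ℝ) <
      (1 / Real.pi) * Real.sqrt |(NumberField.discr K : ℝ)| *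
        (2 + Real.log |(NumberField.discr K : ℝ)|) := by
  set D := |(discr K : ℝ)|
  set M := 2 / π * √D
  have hD : 3 ≤ D := by
    have : (3 : ℤ) ≤ |discr K| := abs_discr_gt_two (by omega)
    simpa [D] using (Int.cast_le (R := ℝ)).mpr this
  have hM : 1 ≤ M := by
    have : π / 2 ≤ √D := Real.le_sqrt_of_sq_le (by nlinarith [pi_lt_d2, pi_pos])
    calc (1 : ℝ) = 2 / π * (π / 2) := by field_simp
      _ ≤ 2 / π * √D := by gcongr
  have hlogM : log M < log D / 2 := by
    rw [log_mul (by positivity) (by positivity), log_sqrt (by positivity)]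
    have : log (2 / π) < 0 :=
      log_neg (by positivity) ((div_lt_one pi_pos).mpr (by linarith [pi_gt_three]))
    linarith
  have hrank : finrank ℤ (𝓞 K) = 2 := (RingOfIntegers.rank K).trans hdeg
  have hcount : classNumber K ≤ ∑ n ∈ Icc 1 ⌊M⌋₊, #n.divisors :=
    (classNumber_le_sum_ncard_absNorm_eq
      (exists_ideal_in_class_of_norm_le_of_finrank_eq_two hdeg)).trans
      (sum_le_sum fun n hn => ncard_absNorm_eq_le_card_divisors hrank (by grind))
  calc (classNumber K : ℝ) ≤ ∑ n ∈ Icc 1 ⌊M⌋₊, (#n.divisors : ℝ) := mod_cast hcount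
    _ ≤ ⌊M⌋₊ * (1 + log ⌊M⌋₊) := sum_card_divisors_le _
    _ ≤ M * (1 + log M) := natFloor_mul_one_add_log_le hM
    _ < M * (1 + log D / 2) := by gcongr
    _ = 1 / π * √D * (2 + log D) := by ring

/-- Let `K` be an imaginary quadratic number field (a degree-2
extension of `ℚ` with no real embedding) with discriminant `D`.  Then the class
number of `K` satisfies `h_K < (1/π) √|D| (2 + log |D|)`. -/
theorem imaginary_quadratic_classNumber_bound (K : Type*) [Field K] [NumberField K]
    (hdeg : Module.finrank ℚ K = 2) (himag : IsEmpty (K →+* ℝ)) :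
    (NumberField.classNumber K : ℝ) <
      (1 / Real.pi) * Real.sqrt |(NumberField.discr K : ℝ)| *
        (2 + Real.log |(NumberField.discr K : ℝ)|) :=
  imaginary_quadratic_classNumber_bound_general K hdeg
end

section
/- Let p > 0, q > e and A > 10⁴ be real numbers such that p ≤ A·log q and q / (log log q) ≤ p·log p. Then p < 2A·log A and q < 3A·(log A)²·(log log A). -/
/-!
Put `x = log q` and `L = log A`. Since `log p ≤ log (A x) = L + log x`, the hypotheses give
`q ≤ A x (L + log x) log x`, that is `x ≤ F x` with
`F t = pqMajorant L t = L + log t + log (L + log t) + log log t`.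
Beyond `3` the increments of `F` are at most `3 (x - X) / X ≤ x - X`, so `F t < t` persists once
it holds. At `X = log (3 A L² log L) = L + log (3 L² log L)` it does hold as soon as `L ≥ 9.2`,
by tangent-line bounds for `log` at `8` and `2`. Hence `x < X`, which is the bound on `q`, and
`p ≤ A x < A X ≤ 2 A L`.
-/

open Real

lemma log_sub_log_le_sub_div {a b : ℝ} (ha : 0 < a) (hb : 0 < b) :
    log b - log a ≤ (b - a) / a := by
  have h := log_le_sub_one_of_pos (div_pos hb ha)
  rw [sub_div, div_self ha.ne']
  rwa [log_div hb.ne' ha.ne'] at h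

lemma log_sub_log_le_sub {a b : ℝ} (ha : 1 ≤ a) (hab : a ≤ b) :
    log b - log a ≤ b - a :=
  (log_sub_log_le_sub_div (by linarith) (by linarith)).trans (div_le_self (by linarith) ha)

noncomputable def pqMajorant (L t : ℝ) : ℝ :=
  L + log t + log (L + log t) + log (log t)

lemma lt_of_le_pqMajorant {L x X : ℝ} (hL : 0 ≤ L) (hX : 3 ≤ X)
    (hx : x ≤ pqMajorant L x) (hXlt : pqMajorant L X < X) : x < X := by
  by_contra! hXx
  have hX0 : 0 < X := by linarith
  have hlogX : 1 ≤ log X := by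
    rw [← log_exp 1]
    exact log_le_log (exp_pos 1) (exp_one_lt_three.le.trans hX)
  have hlog : log x - log X ≤ (x - X) / X := log_sub_log_le_sub_div hX0 (by linarith)
  have hlog_le : log X ≤ log x := log_le_log hX0 hXx
  have hlogadd : log (L + log x) - log (L + log X) ≤ log x - log X := by
    simpa using log_sub_log_le_sub (by linarith) (add_le_add_right hlog_le L)
  have hloglog : log (log x) - log (log X) ≤ log x - log X := log_sub_log_le_sub hlogX hlog_le
  have hslope : 3 * ((x - X) / X) ≤ x - X := by
    rw [mul_div_assoc', div_le_iff₀ hX0]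
    nlinarith
  unfold pqMajorant at hx hXlt
  linarith

lemma log_le_pqMajorant {p q A : ℝ} (hA : 0 < A) (hp : 0 < p) (hq : exp 1 < q)
    (h1 : p ≤ A * log q) (h2 : q / log (log q) ≤ p * log p) :
    log q ≤ pqMajorant (log A) (log q) := by
  have hq0 : 0 < q := (exp_pos 1).trans hq
  have hx : 1 < log q := by rwa [lt_log_iff_exp_lt hq0]
  have hy : 0 < log (log q) := log_pos hx
  have hlogp : 0 < log p := by
    have : 0 < p * log p := (div_pos hq0 hy).trans_le h2
    exact pos_of_mul_pos_right this hp.le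
  have hlogp_le : log p ≤ log A + log (log q) := by
    rw [← log_mul hA.ne' (by linarith)]
    exact log_le_log hp h1
  have hq_le : q ≤ A * log q * (log A + log (log q)) * log (log q) := by
    calc q ≤ p * log p * log (log q) := (div_le_iff₀ hy).mp h2
      _ ≤ A * log q * (log A + log (log q)) * log (log q) := by gcongr
  have hLy : 0 < log A + log (log q) := hlogp.trans_le hlogp_le
  calc log q ≤ log (A * log q * (log A + log (log q)) * log (log q)) := log_le_log hq0 hq_le
    _ = pqMajorant (log A) (log q) := by
      rw [log_mul (by positivity) hy.ne', log_mul (by positivity) hLy.ne',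
        log_mul hA.ne' (by linarith), pqMajorant]

lemma nine_point_two_lt_log {A : ℝ} (hA : 10 ^ 4 < A) : 9.2 < log A := by
  have hexp : exp 46 < (10 ^ 4) ^ 5 :=
    calc exp 46 = exp 1 ^ 46 := by rw [← exp_nat_mul]; norm_num
      _ < 2.7182818286 ^ 46 := by gcongr; exact exp_one_lt_d9
      _ < (10 ^ 4) ^ 5 := by norm_num
  rw [← lt_log_iff_exp_lt (by positivity), log_pow] at hexp
  have := log_lt_log (by positivity) hA
  push_cast at hexp
  linarith

lemma log_eight : log 8 = 3 * log 2 := by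
  rw [show (8 : ℝ) = 2 ^ 3 by norm_num, log_pow, Nat.cast_ofNat]

lemma log_three_mul_sq_mul_log_nonneg {L : ℝ} (hL : 3 ≤ L) : 0 ≤ log (3 * L ^ 2 * log L) := by
  have hM : 1 ≤ log L := by
    rw [le_log_iff_exp_le (by linarith)]; exact exp_one_lt_three.le.trans hL
  exact log_nonneg (by nlinarith)

lemma log_three_mul_sq_mul_log_le {L : ℝ} (hL : 9.2 ≤ L) :
    log (3 * L ^ 2 * log L) ≤ 0.695 * L := by
  have hL0 : 0 < L := by linarith
  have hM : log 8 < log L := log_lt_log (by norm_num) (by linarith)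
  have hM_le : log L - log 8 ≤ (L - 8) / 8 := log_sub_log_le_sub_div (by norm_num) hL0
  have hM0 : 0 < log L := by linarith [log_two_gt_d9, log_eight]
  have hm_le : log (log L) - log 2 ≤ (log L - 2) / 2 := log_sub_log_le_sub_div two_pos hM0
  rw [log_mul (by positivity) hM0.ne', log_mul (by norm_num) (by positivity), log_pow]
  push_cast
  linarith [log_two_lt_d9, log_three_lt_d9, log_eight]

lemma pqMajorant_lt {L : ℝ} (hL : 9.2 ≤ L) :
    pqMajorant L (L + log (3 * L ^ 2 * log L)) < L + log (3 * L ^ 2 * log L) := by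
  have hL0 : 0 < L := by linarith
  have hM : log 8 < log L := log_lt_log (by norm_num) (by linarith)
  have hM_le : log L - log 8 ≤ (L - 8) / 8 := log_sub_log_le_sub_div (by norm_num) hL0
  have hM0 : 0 < log L := by linarith [log_two_gt_d9, log_eight]
  set M := log L
  set s := log (3 * L ^ 2 * M)
  set X := L + s
  have hs : s ≤ 0.695 * L := log_three_mul_sq_mul_log_le hL
  have hs0 : 0 ≤ s := log_three_mul_sq_mul_log_nonneg (by linarith)
  have hX0 : 0 < X := by positivity
  set Y := log X
  have hY0 : 0 < Y := log_pos (by linarith)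
  have hY : Y ≤ M + 0.695 := by
    have := log_sub_log_le_sub_div hL0 hX0
    have hsL : s / L ≤ 0.695 := by rw [div_le_iff₀ hL0]; linarith
    rw [show X - L = s by ring] at this
    linarith
  have hLY : L + Y ≤ 1.318 * L := by linarith [log_two_lt_d9, log_eight]
  have hM2 : 2.07 < M := by linarith [log_two_gt_d9, log_eight]
  -- `1.695 * 1.318 * (M + 0.695) < 3 * M` as soon as `M > 2.03`
  have hprod : X * (L + Y) * Y < 3 * L ^ 2 * M :=
    calc X * (L + Y) * Y ≤ (1.695 * L) * (1.318 * L) * (M + 0.695) := by gcongr; linarith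
      _ < 3 * L ^ 2 * M := by nlinarith [mul_pos (pow_pos hL0 2) (sub_pos.mpr hM2)]
  have hlog := log_lt_log (by positivity) hprod
  rw [log_mul (by positivity) hY0.ne', log_mul hX0.ne' (by positivity)] at hlog
  unfold pqMajorant
  linarith

/-- Let `p > 0`, `q > e` and `A > 10⁴` be real numbers with
`p ≤ A log q` and `q / log log q ≤ p log p`.  Then `p < 2A log A` and
`q < 3A (log A)² log log A`. -/
theorem auxiliary_pq_bound (p q A : ℝ) (hp : 0 < p) (hq : Real.exp 1 < q)
    (hA : (10: ℝ) ^ 4 < A)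
    (h1 : p ≤ A * Real.log q)
    (h2 : q / Real.log (Real.log q) ≤ p * Real.log p) :
    p < 2 * A * Real.log A ∧
      q < 3 * A * (Real.log A) ^ 2 * Real.log (Real.log A) := by
  have hA0 : 0 < A := by linarith
  have hL : 9.2 ≤ log A := (nine_point_two_lt_log hA).le
  set L := log A
  set X := L + log (3 * L ^ 2 * log L)
  have hs0 := log_three_mul_sq_mul_log_nonneg (show 3 ≤ L by linarith)
  have hM0 : 0 < log L := log_pos (by linarith)
  have hx : log q < X := lt_of_le_pqMajorant (by linarith) (by linarith)
    (log_le_pqMajorant hA0 hp hq h1 h2) (pqMajorant_lt hL)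
  constructor
  · calc p ≤ A * log q := h1
      _ < A * X := by gcongr
      _ ≤ 2 * A * L := by nlinarith [log_three_mul_sq_mul_log_le hL]
  · have hexp : exp X = 3 * A * L ^ 2 * log L := by
      rw [exp_add, exp_log hA0, exp_log (by positivity)]; ring
    calc q = exp (log q) := (exp_log ((exp_pos 1).trans hq)).symm
      _ < exp X := exp_lt_exp.mpr hx
      _ = 3 * A * L ^ 2 * log L := hexp
end

section
/- Let A > 10⁴ be a real number, let Q = 3A·(log A)²·(log log A), and let G(x) = A · (log x) · (log log x) · log(A · log x). Then G(Q) < Q. -/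
open Real

-- exp lower/upper bound helpers
private lemma exp_pow_lb (n : ℕ) : (2.7182818283 : ℝ) ^ n ≤ Real.exp n := by
  rw [show ((n:ℝ)) = (n:ℝ) * 1 by ring, Real.exp_nat_mul]
  exact pow_le_pow_left₀ (by norm_num) Real.exp_one_gt_d9.le n

private lemma exp_pow_ub (n : ℕ) : Real.exp n ≤ (2.7182818286 : ℝ) ^ n := by
  rw [show ((n:ℝ)) = (n:ℝ) * 1 by ring, Real.exp_nat_mul]
  exact pow_le_pow_left₀ (Real.exp_pos 1).le Real.exp_one_lt_d9.le n

private lemma exp_lt_of_pow (r c : ℝ) (n : ℕ) (hn : 0 < n) (hc : 0 ≤ c)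
    (h : Real.exp ((n : ℝ) * r) < c ^ n) : Real.exp r < c := by
  rw [Real.exp_nat_mul] at h
  exact lt_of_pow_lt_pow_left₀ n hc h

private lemma lt_exp_of_pow (r c : ℝ) (n : ℕ) (hn : 0 < n) (hc : 0 ≤ c)
    (h : c ^ n < Real.exp ((n : ℝ) * r)) : c < Real.exp r := by
  rw [Real.exp_nat_mul] at h
  exact lt_of_pow_lt_pow_left₀ n (Real.exp_pos r).le h

private lemma log10_gt : (2.3 : ℝ) < Real.log 10 := by
  rw [Real.lt_log_iff_exp_lt (by norm_num)]
  refine exp_lt_of_pow 2.3 10 10 (by norm_num) (by norm_num) ?_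
  calc Real.exp ((10:ℕ) * (2.3:ℝ)) = Real.exp (23:ℕ) := by norm_num
    _ ≤ (2.7182818286 : ℝ) ^ (23:ℕ) := exp_pow_ub 23
    _ < 10 ^ 10 := by norm_num

private lemma log3_lt : Real.log 3 < 1.1 := by
  rw [Real.log_lt_iff_lt_exp (by norm_num)]
  refine lt_exp_of_pow 1.1 3 10 (by norm_num) (by norm_num) ?_
  calc (3:ℝ) ^ 10 < (2.7182818283 : ℝ) ^ (11:ℕ) := by norm_num
    _ ≤ Real.exp (11:ℕ) := exp_pow_lb 11
    _ = Real.exp ((10:ℕ) * (1.1:ℝ)) := by norm_num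

private lemma log92_lt : Real.log 9.2 < 2.25 := by
  rw [Real.log_lt_iff_lt_exp (by norm_num)]
  refine lt_exp_of_pow 2.25 9.2 4 (by norm_num) (by norm_num) ?_
  calc (9.2:ℝ) ^ 4 < (2.7182818283 : ℝ) ^ (9:ℕ) := by norm_num
    _ ≤ Real.exp (9:ℕ) := exp_pow_lb 9
    _ = Real.exp ((4:ℕ) * (2.25:ℝ)) := by norm_num

private lemma log92_gt : (2.2 : ℝ) < Real.log 9.2 := by
  rw [Real.lt_log_iff_exp_lt (by norm_num)]
  refine exp_lt_of_pow 2.2 9.2 5 (by norm_num) (by norm_num) ?_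
  calc Real.exp ((5:ℕ) * (2.2:ℝ)) = Real.exp (11:ℕ) := by norm_num
    _ ≤ (2.7182818286 : ℝ) ^ (11:ℕ) := exp_pow_ub 11
    _ < 9.2 ^ 5 := by norm_num

private lemma log175_lt : Real.log 1.75 < 0.6 := by
  rw [Real.log_lt_iff_lt_exp (by norm_num)]
  refine lt_exp_of_pow 0.6 1.75 5 (by norm_num) (by norm_num) ?_
  calc (1.75:ℝ) ^ 5 < (2.7182818283 : ℝ) ^ (3:ℕ) := by norm_num
    _ ≤ Real.exp (3:ℕ) := exp_pow_lb 3
    _ = Real.exp ((5:ℕ) * (0.6:ℝ)) := by norm_num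

/-- Let `A > 10⁴`, `Q = 3A (log A)² log log A`, and
`G(x) = A (log x)(log log x) log(A log x)`.  Then `G(Q) < Q`. -/
theorem G_Q_lt_Q (A : ℝ) (hA : (10 : ℝ) ^ 4 < A) :
    A * Real.log (3 * A * (Real.log A) ^ 2 * Real.log (Real.log A)) *
        Real.log (Real.log (3 * A * (Real.log A) ^ 2 * Real.log (Real.log A))) *
        Real.log (A * Real.log (3 * A * (Real.log A) ^ 2 * Real.log (Real.log A))) <
      3 * A * (Real.log A) ^ 2 * Real.log (Real.log A) := by
  have hA0 : (0:ℝ) < A := by nlinarith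
  set L := Real.log A with hL
  set M := Real.log L with hM
  have hx : (9.2:ℝ) < L := by
    have h1 : Real.log ((10:ℝ)^4) < L := Real.log_lt_log (by norm_num) hA
    rw [Real.log_pow] at h1
    have := log10_gt
    push_cast at h1
    linarith
  have hy : (2.2:ℝ) < M := by
    have h1 : Real.log (9.2:ℝ) < M := Real.log_lt_log (by norm_num) hx
    linarith [log92_gt]
  have hL0 : (0:ℝ) < L := by linarith
  have hM0 : (0:ℝ) < M := by linarith
  -- upper bound M ≤ L/9.2 + 1.25
  have hMub : M ≤ 5/46 * L + 1.25 := by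
    have h1 : Real.log (L / 9.2) ≤ L / 9.2 - 1 :=
      Real.log_le_sub_one_of_pos (by positivity)
    rw [Real.log_div (by linarith) (by norm_num),
        show L / 9.2 = 5/46 * L from by ring] at h1
    linarith [log92_lt]
  have hlogM : Real.log M ≤ M - 1 := Real.log_le_sub_one_of_pos hM0
  have hlogMpos : 0 < Real.log M := Real.log_pos (by linarith)
  -- expand log Q
  have hQ : Real.log (3 * A * L ^ 2 * M) = Real.log 3 + L + 2 * M + Real.log M := by
    rw [Real.log_mul (by positivity) (by linarith),
        Real.log_mul (by positivity) (by positivity),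
        Real.log_mul (by norm_num) (by linarith),
        Real.log_pow]
    push_cast; ring
  have hlog3pos : 0 < Real.log 3 := Real.log_pos (by norm_num)
  have hQle : Real.log (3 * A * L ^ 2 * M) ≤ 1.75 * L := by
    rw [hQ]; linarith [log3_lt]
  have hQgt : 9.2 < Real.log (3 * A * L ^ 2 * M) := by rw [hQ]; linarith
  -- log log Q ≤ M + 0.6
  have hllQ : Real.log (Real.log (3 * A * L ^ 2 * M)) ≤ M + 0.6 := by
    have h1 : Real.log (Real.log (3 * A * L ^ 2 * M)) ≤ Real.log (1.75 * L) :=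
      Real.log_le_log (by linarith) hQle
    have h2 : Real.log (1.75 * L) = Real.log 1.75 + Real.log L :=
      Real.log_mul (by norm_num) (by linarith)
    rw [h2] at h1
    linarith [log175_lt]
  have hllQ0 : 0 < Real.log (Real.log (3 * A * L ^ 2 * M)) :=
    Real.log_pos (by linarith)
  -- log (A * log Q) = L + log log Q
  have hlast : Real.log (A * Real.log (3 * A * L ^ 2 * M)) =
      L + Real.log (Real.log (3 * A * L ^ 2 * M)) := by
    rw [Real.log_mul (by linarith) (by linarith)]
  have hlastle : Real.log (A * Real.log (3 * A * L ^ 2 * M)) ≤ L + M + 0.6 := by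
    rw [hlast]; linarith
  have hlast0 : 0 < Real.log (A * Real.log (3 * A * L ^ 2 * M)) := by
    rw [hlast]; linarith
  -- key polynomial inequality
  have h4M : 4 * M ≤ L := by linarith
  have key : 1.75 * L * (M + 0.6) * (L + M + 0.6) < 3 * L ^ 2 * M := by
    nlinarith [mul_nonneg (sub_nonneg.2 h4M) (by linarith : (0:ℝ) ≤ M - 2.2),
      sq_nonneg (M - 2.2), mul_pos hL0 hM0, sq_nonneg (L - 4*M),
      mul_nonneg (by linarith : (0:ℝ) ≤ L - 9.2) (by linarith : (0:ℝ) ≤ M - 2.2)]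
  -- assemble
  have step1 : A * Real.log (3 * A * L ^ 2 * M) *
      Real.log (Real.log (3 * A * L ^ 2 * M)) *
      Real.log (A * Real.log (3 * A * L ^ 2 * M)) ≤
      A * (1.75 * L) * (M + 0.6) * (L + M + 0.6) := by
    have h1 : A * Real.log (3 * A * L ^ 2 * M) ≤ A * (1.75 * L) :=
      mul_le_mul_of_nonneg_left hQle hA0.le
    have h2 : A * Real.log (3 * A * L ^ 2 * M) *
        Real.log (Real.log (3 * A * L ^ 2 * M)) ≤ A * (1.75 * L) * (M + 0.6) :=
      mul_le_mul h1 hllQ hllQ0.le (by positivity)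
    exact mul_le_mul h2 hlastle hlast0.le (by positivity)
  have step2 : A * (1.75 * L) * (M + 0.6) * (L + M + 0.6) < 3 * A * L ^ 2 * M := by
    have := mul_lt_mul_of_pos_left key hA0
    nlinarith [this]
  calc A * Real.log (3 * A * L ^ 2 * M) *
      Real.log (Real.log (3 * A * L ^ 2 * M)) *
      Real.log (A * Real.log (3 * A * L ^ 2 * M)) ≤
      A * (1.75 * L) * (M + 0.6) * (L + M + 0.6) := step1
    _ < 3 * A * L ^ 2 * M := step2
end
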